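/- Let S_ν be a geometric sum with i.i.d. increments of distribution F and parameter p, and let h(x) ≤ x/2. Write Δ(y) = P(S_ν > y)/((1/p)F̄(y)) - 1 and Δ[a,b] = sup_{a≤y≤b} Δ(y). Then P(S_ν > x | ν > 1) ≤ (1/p)(1 + Δ(x - h(x))) F̄(x - h(x)) F(h(x)) + (1/p)(1 + Δ[h(x), x - h(x)]) ∫_{h(x)}^{x-h(x)} F̄(x-y) dF(y) + F̄(x - h(x)). -/

import Mathlib

open Filter MeasureTheory ProbabilityTheory Set

noncomputable def tail (μ : Measure ℝ) (x : ℝ) : ℝ := (μ (Set.Ioi x)).toReal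

/-- Relative error of the asymptotic approximation for the geometric sum. -/
noncomputable def Delta {Ω : Type*} [MeasureSpace Ω] (S : Ω → ℝ) (p : ℝ)
    (μ : Measure ℝ) (y : ℝ) : ℝ :=
  (ℙ {ω | y < S ω}).toReal / ((1 / p) * tail μ y) - 1

noncomputable def DeltaSup {Ω : Type*} [MeasureSpace Ω] (S : Ω → ℝ) (p : ℝ)
    (μ : Measure ℝ) (a b : ℝ) : ℝ :=
  sSup (Delta S p μ '' Set.Icc a b)

/-!
Given `ν > 1`, memorylessness of the geometric law makes `S_ν` distributed as `X₁ + S'` with `S'`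
an independent copy of `S_ν`, so `P(S_ν > x | ν > 1) = ∫ P(S_ν > x - u) dF(u)`. Split this
integral at `h(x)` and `x - h(x)`: for `u ≤ h(x)` bound `P(S_ν > x - u)` by `P(S_ν > x - h(x))`,
on the middle range write it as `(1/p)(1 + Δ(x - u)) F̄(x - u)` with `Δ(x - u) ≤ Δ[h(x), x - h(x)]`,
and beyond `x - h(x)` bound it by `1`.
-/


open scoped ENNReal

section RandomSum

variable {Ω : Type*} [MeasurableSpace Ω] {P : Measure Ω}

theorem ProbabilityTheory.IndepFun.measure_lt_add_eq_lintegral [IsFiniteMeasure P] {Z Y : Ω → ℝ}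
    (hZ : Measurable Z) (hY : Measurable Y) (hZY : IndepFun Z Y P) (t : ℝ) :
    P {ω | t < Z ω + Y ω} = ∫⁻ u, P {ω | t - u < Y ω} ∂(P.map Z) := by
  have hs : MeasurableSet {q : ℝ × ℝ | t < q.1 + q.2} :=
    measurableSet_lt measurable_const (measurable_fst.add measurable_snd)
  rw [show {ω | t < Z ω + Y ω} = (fun ω => (Z ω, Y ω)) ⁻¹' {q | t < q.1 + q.2} from rfl,
    ← Measure.map_apply (hZ.prodMk hY) hs,
    (indepFun_iff_map_prod_eq_prod_map_map hZ.aemeasurable hY.aemeasurable).mp hZY,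
    Measure.prod_apply hs]
  refine lintegral_congr fun u => ?_
  rw [Measure.map_apply hY (measurable_prodMk_left hs)]
  congr 1
  ext ω
  simp [sub_lt_iff_lt_add']

theorem antitone_measure_lt (P : Measure Ω) (Y : Ω → ℝ) : Antitone fun y => P {ω | y < Y ω} :=
  fun _ _ hab => measure_mono fun _ hω => lt_of_le_of_lt hab hω

theorem measure_lt_sum_range_succ [IsFiniteMeasure P] {μ : Measure ℝ} {X : ℕ → Ω → ℝ}
    (hX : ∀ i, Measurable (X i)) (hXμ : ∀ i, P.map (X i) = μ) (hXi : iIndepFun X P)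
    (n : ℕ) (t : ℝ) :
    P {ω | t < ∑ i ∈ Finset.range (n + 1), X i ω}
      = ∫⁻ u, P {ω | t - u < ∑ i ∈ Finset.range n, X i ω} ∂μ := by
  have hind : IndepFun (X n) (fun ω => ∑ i ∈ Finset.range n, X i ω) P := by
    have := (hXi.indepFun_finsetSum_of_notMem hX (Finset.notMem_range_self (n := n))).symm
    simpa only [Finset.sum_fn] using this
  simp_rw [Finset.sum_range_succ, add_comm _ (X n _)]
  rw [hind.measure_lt_add_eq_lintegral (hX n) (Finset.measurable_sum _ fun i _ => hX i), hXμ]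

theorem measure_inter_le_eq_tsum {N : Ω → ℕ} (hN : Measurable N) (E : Set Ω) (m : ℕ) :
    P (E ∩ {ω | m ≤ N ω}) = ∑' k, P (E ∩ {ω | N ω = k + m}) := by
  have hU : {ω | m ≤ N ω} = ⋃ k, {ω | N ω = k + m} := by
    ext ω
    simp only [mem_ofPred_eq, mem_iUnion]
    exact ⟨fun h => ⟨N ω - m, by omega⟩, by rintro ⟨k, hk⟩; omega⟩
  have hdisj : Pairwise (Function.onFun Disjoint fun k => {ω | N ω = k + m}) := fun a b hab =>
    Set.disjoint_left.mpr fun ω ha hb => hab (by rw [mem_ofPred_eq] at ha hb; omega)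
  rw [inter_comm, ← Measure.restrict_apply (t := {ω | m ≤ N ω}) (hN measurableSet_Ici), hU,
    measure_iUnion hdisj fun k => hN (measurableSet_singleton _)]
  exact tsum_congr fun k => by
    rw [Measure.restrict_apply (t := {ω | N ω = k + m}) (hN (measurableSet_singleton _)),
      inter_comm]

theorem ProbabilityTheory.IndepFun.measure_lt_randomSum_inter {X : ℕ → Ω → ℝ} {N : Ω → ℕ}
    (hNX : IndepFun N (fun ω i => X i ω) P) (t : ℝ) (k : ℕ) :
    P ({ω | t < ∑ i ∈ Finset.range (N ω), X i ω} ∩ {ω | N ω = k})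
      = P {ω | N ω = k} * P {ω | t < ∑ i ∈ Finset.range k, X i ω} := by
  have hs : MeasurableSet {x : ℕ → ℝ | t < ∑ i ∈ Finset.range k, x i} :=
    measurableSet_lt measurable_const (Finset.measurable_sum _ fun i _ => measurable_pi_apply i)
  have hE : {ω | t < ∑ i ∈ Finset.range (N ω), X i ω} ∩ {ω | N ω = k}
      = N ⁻¹' {k} ∩ (fun ω i => X i ω) ⁻¹' {x | t < ∑ i ∈ Finset.range k, x i} := by
    ext ω
    simp only [mem_inter_iff, mem_ofPred_eq, mem_preimage, mem_singleton_iff]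
    exact ⟨fun ⟨h, hk⟩ => ⟨hk, hk ▸ h⟩, fun ⟨hk, h⟩ => ⟨hk ▸ h, hk⟩⟩
  rw [hE, hNX.measure_inter_preimage_eq_mul _ _ (measurableSet_singleton k) hs]
  rfl

end RandomSum

section Geometric

variable {Ω : Type*} [MeasurableSpace Ω] {P : Measure Ω}

def HasGeometricLaw (P : Measure Ω) (N : Ω → ℕ) (p : ℝ) : Prop :=
  ∀ k : ℕ, 1 ≤ k → P {ω | N ω = k} = ENNReal.ofReal (p * (1 - p) ^ (k - 1))

theorem tsum_ofReal_mul_pow_one_sub {p : ℝ} (hp0 : 0 < p) (hp1 : p ≤ 1) :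
    ∑' k : ℕ, ENNReal.ofReal (p * (1 - p) ^ k) = 1 := by
  have hq0 : 0 ≤ 1 - p := by linarith
  have hq1 : 1 - p < 1 := by linarith
  rw [← ENNReal.ofReal_tsum_of_nonneg (fun k => by positivity)
    ((summable_geometric_of_lt_one hq0 hq1).mul_left p), tsum_mul_left,
    tsum_geometric_of_lt_one hq0 hq1, sub_sub_cancel, mul_inv_cancel₀ hp0.ne', ENNReal.ofReal_one]

namespace HasGeometricLaw

variable {N : Ω → ℕ} {p : ℝ}

theorem measure_eq_add_one (hgeom : HasGeometricLaw P N p) (k : ℕ) :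
    P {ω | N ω = k + 1} = ENNReal.ofReal (p * (1 - p) ^ k) := by
  simpa using hgeom (k + 1) le_add_self

theorem measure_eq_add_two (hgeom : HasGeometricLaw P N p) (hp1 : p ≤ 1) (k : ℕ) :
    P {ω | N ω = k + 2} = ENNReal.ofReal (1 - p) * P {ω | N ω = k + 1} := by
  rw [show k + 2 = k + 1 + 1 from rfl, hgeom.measure_eq_add_one, hgeom.measure_eq_add_one,
    ← ENNReal.ofReal_mul (by linarith)]
  ring_nf

theorem measure_one_le (hgeom : HasGeometricLaw P N p) (hN : Measurable N) (hp0 : 0 < p)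
    (hp1 : p ≤ 1) : P {ω | 1 ≤ N ω} = 1 := by
  have h := measure_inter_le_eq_tsum (P := P) hN univ 1
  simp only [univ_inter, hgeom.measure_eq_add_one] at h
  rw [h, tsum_ofReal_mul_pow_one_sub hp0 hp1]

theorem measure_compl_one_le [IsProbabilityMeasure P] (hgeom : HasGeometricLaw P N p)
    (hN : Measurable N) (hp0 : 0 < p) (hp1 : p ≤ 1) : P {ω | 1 ≤ N ω}ᶜ = 0 := by
  rw [prob_compl_eq_zero_iff (show MeasurableSet {ω | 1 ≤ N ω} from hN measurableSet_Ici)]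
  exact hgeom.measure_one_le hN hp0 hp1

theorem measure_one_lt (hgeom : HasGeometricLaw P N p) (hN : Measurable N) (hp0 : 0 < p)
    (hp1 : p ≤ 1) : P {ω | 1 < N ω} = ENNReal.ofReal (1 - p) := by
  have h1 := measure_inter_le_eq_tsum (P := P) hN univ 1
  have h2 := measure_inter_le_eq_tsum (P := P) hN univ 2
  simp only [univ_inter, hgeom.measure_eq_add_two hp1, ENNReal.tsum_mul_left] at h1 h2
  rw [← h1, hgeom.measure_one_le hN hp0 hp1, mul_one] at h2
  exact h2

end HasGeometricLaw

end Geometric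

section GeometricSum

variable {Ω : Type*} [MeasurableSpace Ω] {P : Measure Ω} {X : ℕ → Ω → ℝ} {N : Ω → ℕ}

theorem measure_lt_randomSum_eq_tsum (hN : Measurable N) (hNX : IndepFun N (fun ω i => X i ω) P)
    (hN0 : P {ω | 1 ≤ N ω}ᶜ = 0) (t : ℝ) :
    P {ω | t < ∑ i ∈ Finset.range (N ω), X i ω}
      = ∑' k, P {ω | N ω = k + 1} * P {ω | t < ∑ i ∈ Finset.range (k + 1), X i ω} := by
  rw [← measure_inter_conull hN0, measure_inter_le_eq_tsum hN]
  exact tsum_congr fun k => hNX.measure_lt_randomSum_inter t (k + 1)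

theorem HasGeometricLaw.cond_measure_lt_randomSum [IsProbabilityMeasure P] {μ : Measure ℝ}
    {p : ℝ} (hgeom : HasGeometricLaw P N p) (hN : Measurable N) (hp0 : 0 < p) (hp1 : p < 1)
    (hX : ∀ i, Measurable (X i)) (hXμ : ∀ i, P.map (X i) = μ) (hXi : iIndepFun X P)
    (hNX : IndepFun N (fun ω i => X i ω) P) (x : ℝ) :
    P[|{ω | 1 < N ω}] {ω | x < ∑ i ∈ Finset.range (N ω), X i ω}
      = ∫⁻ u, P {ω | x - u < ∑ i ∈ Finset.range (N ω), X i ω} ∂μ := by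
  have hmono (k : ℕ) : Monotone fun u => P {ω | x - u < ∑ i ∈ Finset.range k, X i ω} :=
    (antitone_measure_lt P _).comp fun _ _ h => sub_le_sub_left h x
  have hinter : P ({ω | 1 < N ω} ∩ {ω | x < ∑ i ∈ Finset.range (N ω), X i ω})
      = ENNReal.ofReal (1 - p) * ∫⁻ u, P {ω | x - u < ∑ i ∈ Finset.range (N ω), X i ω} ∂μ := by
    calc _ = ∑' k, P ({ω | x < ∑ i ∈ Finset.range (N ω), X i ω} ∩ {ω | N ω = k + 2}) := by
          rw [inter_comm]
          exact measure_inter_le_eq_tsum hN _ 2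
      _ = ∑' k, ENNReal.ofReal (1 - p) * ∫⁻ u, P {ω | N ω = k + 1}
            * P {ω | x - u < ∑ i ∈ Finset.range (k + 1), X i ω} ∂μ := by
          refine tsum_congr fun k => ?_
          rw [hNX.measure_lt_randomSum_inter, hgeom.measure_eq_add_two hp1.le,
            measure_lt_sum_range_succ hX hXμ hXi, mul_assoc,
            lintegral_const_mul _ (hmono _).measurable]
      _ = _ := by
          rw [ENNReal.tsum_mul_left,
            ← lintegral_tsum fun k => ((hmono _).measurable.const_mul _).aemeasurable]
          simp_rw [← measure_lt_randomSum_eq_tsum hN hNX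
            (hgeom.measure_compl_one_le hN hp0 hp1.le)]
  rw [cond_apply (show MeasurableSet {ω | 1 < N ω} from hN measurableSet_Ioi), hinter,
    hgeom.measure_one_lt hN hp0 hp1.le, ← mul_assoc,
    ENNReal.inv_mul_cancel (by simpa using hp1) ENNReal.ofReal_ne_top, one_mul]

end GeometricSum

section Tail

variable {μ : Measure ℝ}

theorem tail_nonneg (μ : Measure ℝ) (y : ℝ) : 0 ≤ tail μ y := ENNReal.toReal_nonneg

theorem ofReal_tail [IsFiniteMeasure μ] (y : ℝ) : ENNReal.ofReal (tail μ y) = μ (Ioi y) :=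
  ENNReal.ofReal_toReal (measure_ne_top μ _)

theorem tail_pos [IsFiniteMeasure μ] {y : ℝ} (hy : 0 < μ (Ioi y)) : 0 < tail μ y :=
  ENNReal.toReal_pos hy.ne' (measure_ne_top μ _)

theorem antitone_tail [IsFiniteMeasure μ] : Antitone (tail μ) := fun _ _ h =>
  ENNReal.toReal_mono (measure_ne_top _ _) (measure_mono (Ioi_subset_Ioi h))

theorem integrableOn_tail_sub [IsProbabilityMeasure μ] (x : ℝ) (s : Set ℝ) :
    IntegrableOn (fun u => tail μ (x - u)) s μ := by
  have hmono : Monotone fun u => tail μ (x - u) :=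
    antitone_tail.comp fun _ _ h => sub_le_sub_left h x
  refine Integrable.of_bound hmono.measurable.aestronglyMeasurable 1 (ae_of_all _ fun u => ?_)
  rw [Real.norm_of_nonneg (tail_nonneg μ _)]
  exact measureReal_le_one

end Tail

section Delta

variable {Ω : Type*} [MeasureSpace Ω] (S : Ω → ℝ) {p : ℝ} {μ : Measure ℝ}

theorem one_div_mul_one_add_Delta_mul_tail (hp : p ≠ 0) {y : ℝ} (hy : 0 < tail μ y) :
    1 / p * (1 + Delta S p μ y) * tail μ y = (ℙ {ω | y < S ω}).toReal := by
  unfold Delta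
  field_simp
  ring

theorem neg_one_le_Delta (hp : 0 ≤ p) (y : ℝ) : -1 ≤ Delta S p μ y := by
  have : 0 ≤ (ℙ {ω | y < S ω}).toReal / (1 / p * tail μ y) :=
    div_nonneg ENNReal.toReal_nonneg (mul_nonneg (by positivity) (tail_nonneg μ y))
  unfold Delta
  linarith

variable [IsProbabilityMeasure (ℙ : Measure Ω)] [IsFiniteMeasure μ] {a b : ℝ}

theorem bddAbove_Delta_image (hp : 0 < p) (hb : 0 < tail μ b) :
    BddAbove (Delta S p μ '' Icc a b) := by
  refine ⟨p / tail μ b, ?_⟩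
  rintro _ ⟨y, hy, rfl⟩
  have hty : 0 < tail μ y := hb.trans_le (antitone_tail hy.2)
  calc Delta S p μ y ≤ (ℙ {ω | y < S ω}).toReal / (1 / p * tail μ y) := sub_le_self _ zero_le_one
    _ ≤ 1 / (1 / p * tail μ y) := div_le_div_of_nonneg_right measureReal_le_one (by positivity)
    _ = p / tail μ y := by field_simp
    _ ≤ p / tail μ b := div_le_div_of_nonneg_left hp.le hb (antitone_tail hy.2)

theorem Delta_le_DeltaSup (hp : 0 < p) (hb : 0 < tail μ b) {y : ℝ} (hy : y ∈ Icc a b) :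
    Delta S p μ y ≤ DeltaSup S p μ a b :=
  le_csSup (bddAbove_Delta_image S hp hb) (mem_image_of_mem _ hy)

theorem one_add_DeltaSup_nonneg (hp : 0 < p) (hab : a ≤ b) (hb : 0 < tail μ b) :
    0 ≤ 1 + DeltaSup S p μ a b := by
  linarith [neg_one_le_Delta S hp.le (μ := μ) b, Delta_le_DeltaSup S hp hb ⟨hab, le_rfl⟩]

theorem measure_lt_le_ofReal_DeltaSup (hp : 0 < p) (hb : 0 < tail μ b) {y : ℝ}
    (hy : y ∈ Icc a b) :
    ℙ {ω | y < S ω} ≤ ENNReal.ofReal (1 / p * (1 + DeltaSup S p μ a b) * tail μ y) := by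
  rw [← ENNReal.ofReal_toReal (measure_ne_top ℙ _),
    ← one_div_mul_one_add_Delta_mul_tail S hp.ne' (hb.trans_le (antitone_tail hy.2))]
  gcongr
  · exact tail_nonneg μ y
  · exact Delta_le_DeltaSup S hp hb hy

end Delta

theorem lintegral_sub_le_of_antitone {μ : Measure ℝ} {g : ℝ → ℝ≥0∞} (hg : Antitone g)
    (hg1 : ∀ y, g y ≤ 1) (x : ℝ) {a b : ℝ} (hab : a ≤ b) :
    ∫⁻ u, g (x - u) ∂μ ≤ g (x - a) * μ (Iic a) + ∫⁻ u in Ioc a b, g (x - u) ∂μ + μ (Ioi b) := by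
  rw [← lintegral_add_compl _ measurableSet_Iic, compl_Iic, ← Ioc_union_Ioi_eq_Ioi hab,
    lintegral_union measurableSet_Ioi (Ioc_disjoint_Ioi le_rfl), ← add_assoc]
  gcongr
  · calc ∫⁻ u in Iic a, g (x - u) ∂μ ≤ ∫⁻ _ in Iic a, g (x - a) ∂μ :=
          setLIntegral_mono' measurableSet_Iic fun u hu => hg (sub_le_sub_left hu x)
      _ = g (x - a) * μ (Iic a) := setLIntegral_const _ _
  · calc ∫⁻ u in Ioi b, g (x - u) ∂μ ≤ ∫⁻ _ in Ioi b, 1 ∂μ :=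
          setLIntegral_mono' measurableSet_Ioi fun u _ => hg1 _
      _ = μ (Ioi b) := by rw [setLIntegral_const, one_mul]

theorem setLIntegral_le_ofReal_mul_integral {α : Type*} [MeasurableSpace α] {μ : Measure α}
    {s : Set α} (hs : MeasurableSet s) {g : α → ℝ≥0∞} {f : α → ℝ} (hf : IntegrableOn f s μ)
    (hf0 : ∀ u ∈ s, 0 ≤ f u) {c : ℝ} (hc : 0 ≤ c) (hgf : ∀ u ∈ s, g u ≤ ENNReal.ofReal (c * f u)) :
    ∫⁻ u in s, g u ∂μ ≤ ENNReal.ofReal (c * ∫ u in s, f u ∂μ) := by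
  rw [← integral_const_mul, ofReal_integral_eq_lintegral_ofReal (hf.const_mul c)
    ((ae_restrict_iff' hs).mpr (ae_of_all _ fun u hu => mul_nonneg hc (hf0 u hu)))]
  exact setLIntegral_mono' hs hgf

theorem cond_geometric_sum_upper_bound_general {Ω : Type*} [MeasureSpace Ω]
    [IsProbabilityMeasure (ℙ : Measure Ω)]
    (μ : Measure ℝ) [IsProbabilityMeasure μ]
    (hunb : ∀ x, 0 < μ (Set.Ioi x))
    (X : ℕ → Ω → ℝ) (hXm : ∀ i, Measurable (X i))
    (hXd : ∀ i, Measure.map (X i) ℙ = μ)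
    (hXi : iIndepFun X ℙ)
    (ν : Ω → ℕ) (hνm : Measurable ν)
    (p : ℝ) (hp0 : 0 < p) (hp1 : p < 1)
    (hgeom : ∀ k : ℕ, 1 ≤ k →
      ℙ {ω | ν ω = k} = ENNReal.ofReal (p * (1 - p) ^ (k - 1)))
    (hνX : IndepFun ν (fun ω i => X i ω) ℙ)
    (h : ℝ → ℝ) (x : ℝ) (hh : h x ≤ x / 2) :
    (ℙ[|{ω | 1 < ν ω}]
        {ω | x < ∑ i ∈ Finset.range (ν ω), X i ω}).toReal ≤
      (1 / p) * (1 + Delta (fun ω => ∑ i ∈ Finset.range (ν ω), X i ω) p μ (x - h x)) *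
          tail μ (x - h x) * (μ (Set.Iic (h x))).toReal +
      (1 / p) * (1 + DeltaSup (fun ω => ∑ i ∈ Finset.range (ν ω), X i ω) p μ (h x) (x - h x)) *
          (∫ y in Set.Ioc (h x) (x - h x), tail μ (x - y) ∂μ) +
      tail μ (x - h x) := by
  set S : Ω → ℝ := fun ω => ∑ i ∈ Finset.range (ν ω), X i ω
  have hab : h x ≤ x - h x := by linarith
  have htail : 0 < tail μ (x - h x) := tail_pos (hunb _)
  have hc : 0 ≤ 1 / p * (1 + DeltaSup S p μ (h x) (x - h x)) :=
    mul_nonneg (by positivity) (one_add_DeltaSup_nonneg S hp0 hab htail)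
  have hA : 0 ≤ (ℙ {ω | x - h x < S ω}).toReal * (μ (Iic (h x))).toReal := by positivity
  have hB : 0 ≤ 1 / p * (1 + DeltaSup S p μ (h x) (x - h x))
      * ∫ y in Ioc (h x) (x - h x), tail μ (x - y) ∂μ :=
    mul_nonneg hc (setIntegral_nonneg measurableSet_Ioc fun _ _ => tail_nonneg μ _)
  rw [HasGeometricLaw.cond_measure_lt_randomSum hgeom hνm hp0 hp1 hXm hXd hXi hνX,
    one_div_mul_one_add_Delta_mul_tail S hp0.ne' htail]
  refine ENNReal.toReal_le_of_le_ofReal (add_nonneg (add_nonneg hA hB) (tail_nonneg μ _)) ?_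
  rw [ENNReal.ofReal_add (add_nonneg hA hB) (tail_nonneg μ _), ENNReal.ofReal_add hA hB,
    ENNReal.ofReal_mul ENNReal.toReal_nonneg, ENNReal.ofReal_toReal (measure_ne_top _ _),
    ENNReal.ofReal_toReal (measure_ne_top _ _), ofReal_tail]
  refine (lintegral_sub_le_of_antitone (antitone_measure_lt ℙ S) (fun _ => prob_le_one) x
    hab).trans ?_
  gcongr
  exact setLIntegral_le_ofReal_mul_integral measurableSet_Ioc (integrableOn_tail_sub x _)
    (fun _ _ => tail_nonneg μ _) hc fun u hu =>
      measure_lt_le_ofReal_DeltaSup S hp0 htail ⟨by linarith [hu.2], by linarith [hu.1]⟩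

/-- Upper bound for P(S_ν > x | ν > 1). -/
theorem cond_geometric_sum_upper_bound {Ω : Type*} [MeasureSpace Ω]
    [IsProbabilityMeasure (ℙ : Measure Ω)]
    (μ : Measure ℝ) [IsProbabilityMeasure μ]
    (hsupp : μ (Set.Iio 0) = 0) (hunb : ∀ x, 0 < μ (Set.Ioi x))
    (X : ℕ → Ω → ℝ) (hXm : ∀ i, Measurable (X i))
    (hXd : ∀ i, Measure.map (X i) ℙ = μ)
    (hXi : iIndepFun X ℙ)
    (ν : Ω → ℕ) (hνm : Measurable ν)
    (p : ℝ) (hp0 : 0 < p) (hp1 : p < 1)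
    (hgeom : ∀ k : ℕ, 1 ≤ k →
      ℙ {ω | ν ω = k} = ENNReal.ofReal (p * (1 - p) ^ (k - 1)))
    (hνX : IndepFun ν (fun ω i => X i ω) ℙ)
    (h : ℝ → ℝ) (x : ℝ) (hh0 : 0 ≤ h x) (hh : h x ≤ x / 2) :
    (ℙ[|{ω | 1 < ν ω}]
        {ω | x < ∑ i ∈ Finset.range (ν ω), X i ω}).toReal ≤
      (1 / p) * (1 + Delta (fun ω => ∑ i ∈ Finset.range (ν ω), X i ω) p μ (x - h x)) *
          tail μ (x - h x) * (μ (Set.Iic (h x))).toReal +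
      (1 / p) * (1 + DeltaSup (fun ω => ∑ i ∈ Finset.range (ν ω), X i ω) p μ (h x) (x - h x)) *
          (∫ y in Set.Ioc (h x) (x - h x), tail μ (x - y) ∂μ) +
      tail μ (x - h x) :=
  cond_geometric_sum_upper_bound_general μ hunb X hXm hXd hXi ν hνm p hp0 hp1 hgeom hνX h x hh
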